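/- arXiv:2601.12388 — 17 statements merged into one kernel-verified Lean document; each statement's English description precedes it below -/
import Mathlib

section
/- Let R be a commutative ring with identity and I an ideal of R. The union of a nonempty chain (with respect to inclusion) of strongly hollow ideals contained in I is a strongly hollow ideal contained in I; consequently, if there exists at least one strongly hollow ideal contained in I, then there exists an inclusion-maximal strongly hollow ideal contained in I. -/
/-- An ideal `I` is strongly hollow if `I ⊆ A + B` implies `I ⊆ A` or `I ⊆ B`. -/
def StronglyHollow {R : Type*} [CommRing R] (I : Ideal R) : Prop :=
  ∀ A B : Ideal R, I ≤ A + B → I ≤ A ∨ I ≤ B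

/-- Given `K₁ ⊄ A` and `K₂ ⊄ B` in the chain, the larger of the two lies in neither `A` nor `B`,
although it lies in `A + B`. -/
theorem StronglyHollow.sSup_of_isChain {R : Type*} [CommRing R] {S : Set (Ideal R)}
    (hchain : IsChain (· ≤ ·) S) (hS : ∀ K ∈ S, StronglyHollow K) :
    StronglyHollow (sSup S) := by
  intro A B hAB
  by_contra! h
  obtain ⟨K₁, hK₁, hK₁A⟩ : ∃ K ∈ S, ¬K ≤ A := by simpa [sSup_le_iff] using h.1
  obtain ⟨K₂, hK₂, hK₂B⟩ : ∃ K ∈ S, ¬K ≤ B := by simpa [sSup_le_iff] using h.2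
  have hsplit {K} (hK : K ∈ S) : K ≤ A ∨ K ≤ B := hS K hK A B ((le_sSup hK).trans hAB)
  rcases hchain.total hK₁ hK₂ with h₁₂ | h₂₁
  · exact (hsplit hK₂).elim (fun h => hK₁A (h₁₂.trans h)) hK₂B
  · exact (hsplit hK₁).elim hK₁A (fun h => hK₂B (h₂₁.trans h))

theorem stmt0 {R : Type*} [CommRing R] (I : Ideal R) :
    (∀ S : Set (Ideal R), S.Nonempty → IsChain (· ≤ ·) S →
      (∀ K ∈ S, StronglyHollow K ∧ K ≤ I) →
      StronglyHollow (sSup S) ∧ sSup S ≤ I) ∧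
    ((∃ K : Ideal R, StronglyHollow K ∧ K ≤ I) →
      ∃ H : Ideal R, StronglyHollow H ∧ H ≤ I ∧
        ∀ K : Ideal R, StronglyHollow K → K ≤ I → H ≤ K → K = H) := by
  have chain_sSup {S : Set (Ideal R)} (hchain : IsChain (· ≤ ·) S)
      (hS : ∀ K ∈ S, StronglyHollow K ∧ K ≤ I) : StronglyHollow (sSup S) ∧ sSup S ≤ I :=
    ⟨.sSup_of_isChain hchain fun K hK => (hS K hK).1, sSup_le fun K hK => (hS K hK).2⟩
  refine ⟨fun S _ => chain_sSup, ?_⟩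
  rintro ⟨K₀, hK₀⟩
  obtain ⟨H, -, hH, hmax⟩ := zorn_le_nonempty₀ {K : Ideal R | StronglyHollow K ∧ K ≤ I}
    (fun c hc hchain _ _ => ⟨sSup c, chain_sSup hchain hc, fun _ => le_sSup⟩) K₀ hK₀
  exact ⟨H, hH.1, hH.2, fun K hK hKI hHK => le_antisymm (hmax ⟨hK, hKI⟩ hHK) hHK⟩
end

section
/- Let I be a completely strongly hollow ideal of a commutative ring R, and let Γ_I denote the sum of all ideals J of R with I ⊄ J. Then I ∩ Γ_I is the greatest ideal strictly contained in I, i.e., every ideal J with J ⊊ I satisfies J ⊆ I ∩ Γ_I, and I ∩ Γ_I ⊊ I. -/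
/-- An ideal `I` is completely strongly hollow if whenever `I` is contained in the sum
of a family of ideals, it is contained in one of them. -/
def CompletelyStronglyHollow {R : Type*} [CommRing R] (I : Ideal R) : Prop :=
  ∀ S : Set (Ideal R), I ≤ sSup S → ∃ J ∈ S, I ≤ J

section CompleteLattice

variable {α : Type*} [CompleteLattice α]

/-- The paper's `Γ_a`: the join of all elements not above `a`. -/
def sSupNotAbove (a : α) : α :=
  sSup {c | ¬ a ≤ c}

theorem le_sSupNotAbove_of_lt {a b : α} (h : b < a) : b ≤ sSupNotAbove a :=
  le_sSup h.not_ge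

theorem not_le_sSupNotAbove {a : α} (ha : ∀ S : Set α, a ≤ sSup S → ∃ c ∈ S, a ≤ c) :
    ¬ a ≤ sSupNotAbove a := fun hle => by
  obtain ⟨c, hc, hac⟩ := ha _ hle
  exact hc hac

end CompleteLattice

theorem stmt1 {R : Type*} [CommRing R] (I : Ideal R)
    (hI : CompletelyStronglyHollow I) :
    (∀ J : Ideal R, J < I → J ≤ I ⊓ sSup {J : Ideal R | ¬ I ≤ J}) ∧
      I ⊓ sSup {J : Ideal R | ¬ I ≤ J} < I :=
  ⟨fun _ hJ => le_inf hJ.le (le_sSupNotAbove_of_lt hJ),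
    inf_lt_left.2 (not_le_sSupNotAbove hI)⟩
end

section
/- Let I, J be ideals of a commutative ring R with I ⊄ J. If I is strongly hollow in R, then (I + J)/J is a strongly hollow ideal of R/J. -/
theorem Ideal.comap_sup_of_surjective {R S : Type*} [CommRing R] [CommRing S] {f : R →+* S}
    (hf : Function.Surjective f) (A B : Ideal S) :
    (A ⊔ B).comap f = A.comap f ⊔ B.comap f := by
  have hker : RingHom.ker f ≤ A.comap f ⊔ B.comap f :=
    le_sup_of_le_left (Ideal.comap_mono bot_le)
  rw [← Ideal.map_sup_comap_of_surjective f hf, Ideal.comap_map_of_surjective' f hf,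
    sup_eq_left.mpr hker]

theorem StronglyHollow.map_of_surjective {R S : Type*} [CommRing R] [CommRing S] {f : R →+* S}
    (hf : Function.Surjective f) {I : Ideal R} (hI : StronglyHollow I) :
    StronglyHollow (I.map f) := by
  intro A B h
  have hIcomap : I ≤ A.comap f + B.comap f := by
    rw [Ideal.add_eq_sup, ← Ideal.comap_sup_of_surjective hf]
    exact Ideal.map_le_iff_le_comap.mp h
  exact (hI _ _ hIcomap).imp Ideal.map_le_iff_le_comap.mpr Ideal.map_le_iff_le_comap.mpr

theorem Ideal.map_quotient_mk_sup_self {R : Type*} [CommRing R] (I J : Ideal R) :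
    (I ⊔ J).map (Ideal.Quotient.mk J) = I.map (Ideal.Quotient.mk J) := by
  rw [Ideal.map_sup, Ideal.map_quotient_self, sup_bot_eq]

theorem stmt2_general {R : Type*} [CommRing R] (I J : Ideal R)
    (hI : StronglyHollow I) :
    StronglyHollow ((I + J).map (Ideal.Quotient.mk J)) := by
  rw [Ideal.add_eq_sup, Ideal.map_quotient_mk_sup_self]
  exact hI.map_of_surjective Ideal.Quotient.mk_surjective

theorem stmt2 {R : Type*} [CommRing R] (I J : Ideal R) (hIJ : ¬ I ≤ J)
    (hI : StronglyHollow I) :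
    StronglyHollow ((I + J).map (Ideal.Quotient.mk J)) :=
  stmt2_general I J hI
end

section
/- Let φ : R → R' be a surjective homomorphism of commutative rings and let J' be a strongly hollow ideal of R'. Then for all ideals A, B of R, φ⁻¹(J') ⊆ A + B implies φ⁻¹(J') ⊆ A + ker φ or φ⁻¹(J') ⊆ B + ker φ. -/
namespace Ideal

variable {R S : Type*} [CommRing R] [CommRing S] {f : R →+* S}

theorem le_map_add_map_of_comap_le_add (hf : Function.Surjective f) {J : Ideal S}
    {A B : Ideal R} (h : J.comap f ≤ A + B) : J ≤ A.map f + B.map f := by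
  rw [← map_comap_of_surjective f hf J]
  exact (map_mono h).trans_eq (map_sup f A B)

theorem comap_le_add_ker_of_le_map (hf : Function.Surjective f) {J : Ideal S} {A : Ideal R}
    (h : J ≤ A.map f) : J.comap f ≤ A + RingHom.ker f :=
  (comap_mono h).trans_eq (comap_map_of_surjective' f hf A)

end Ideal

theorem stmt4 {R R' : Type*} [CommRing R] [CommRing R'] (φ : R →+* R')
    (hφ : Function.Surjective φ) (J' : Ideal R') (hJ' : StronglyHollow J') :
    ∀ A B : Ideal R, J'.comap φ ≤ A + B →
      J'.comap φ ≤ A + RingHom.ker φ ∨ J'.comap φ ≤ B + RingHom.ker φ := by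
  intro A B h
  exact (hJ' _ _ (Ideal.le_map_add_map_of_comap_le_add hφ h)).imp
    (Ideal.comap_le_add_ker_of_le_map hφ) (Ideal.comap_le_add_ker_of_le_map hφ)
end

section
/- Let φ : R → R' be a surjective homomorphism of commutative rings, let J' be a strongly hollow ideal of R', and set H := φ⁻¹(J'). If ker φ is small in H (that is, for every ideal L of R with L ⊆ H, ker φ + L = H implies L = H), then H is a strongly hollow ideal of R. -/
theorem le_of_le_sup_of_small {α : Type*} [Lattice α] [IsModularLattice α] {a k h : α}
    (hkh : k ≤ h) (hsmall : ∀ l ≤ h, k ⊔ l = h → l = h) (hle : h ≤ a ⊔ k) : h ≤ a := by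
  have hcover : k ⊔ a ⊓ h = h := by
    rw [← sup_inf_assoc_of_le a hkh, sup_comm]
    exact inf_eq_right.mpr hle
  rw [← hsmall (a ⊓ h) inf_le_right hcover]
  exact inf_le_left

theorem Ideal.le_map_add_map_of_comap_le_add_s5 {R R' : Type*} [CommRing R] [CommRing R']
    {φ : R →+* R'} (hφ : Function.Surjective φ) {J' : Ideal R'} {A B : Ideal R}
    (hle : J'.comap φ ≤ A + B) : J' ≤ A.map φ + B.map φ := by
  rw [← Ideal.map_comap_of_surjective φ hφ J']
  exact (Ideal.map_mono hle).trans (Ideal.map_sup φ A B).le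

theorem Ideal.comap_le_of_le_map_of_small {R R' : Type*} [CommRing R] [CommRing R']
    {φ : R →+* R'} (hφ : Function.Surjective φ) {J' : Ideal R'}
    (hsmall : ∀ L : Ideal R, L ≤ J'.comap φ →
      RingHom.ker φ + L = J'.comap φ → L = J'.comap φ)
    {A : Ideal R} (hA : J' ≤ A.map φ) : J'.comap φ ≤ A := by
  refine le_of_le_sup_of_small (Ideal.ker_le_comap φ) hsmall ?_
  rw [← Ideal.comap_map_of_surjective' φ hφ A]
  exact Ideal.comap_mono hA

theorem stmt5 {R R' : Type*} [CommRing R] [CommRing R'] (φ : R →+* R')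
    (hφ : Function.Surjective φ) (J' : Ideal R') (hJ' : StronglyHollow J')
    (hsmall : ∀ L : Ideal R, L ≤ J'.comap φ →
      RingHom.ker φ + L = J'.comap φ → L = J'.comap φ) :
    StronglyHollow (J'.comap φ) := by
  intro A B hAB
  exact (hJ' _ _ (Ideal.le_map_add_map_of_comap_le_add_s5 hφ hAB)).imp
    (Ideal.comap_le_of_le_map_of_small hφ hsmall) (Ideal.comap_le_of_le_map_of_small hφ hsmall)
end

section
/- Let R be a commutative ring and I an ideal of R. Then I is completely strongly hollow if and only if there exists an ideal K of R such that I is the least ideal (by inclusion) not contained in K, i.e., I ⊄ K and every ideal J with J ⊄ K satisfies I ⊆ J. -/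
/-! In any complete lattice, `a` is below no supremum of elements not above it exactly when it is
not below the single element `sSup {b | ¬ a ≤ b}`; that element is then the largest one not above
`a`, so it is the `K` of the theorem, and conversely any such `K` bounds every `b` with `¬ a ≤ b`. -/

section CompleteLattice

variable {α : Type*} [CompleteLattice α] {a : α}

theorem le_of_not_le_sSup_setOf_not_le {b : α} (hb : ¬ b ≤ sSup {c | ¬ a ≤ c}) : a ≤ b := by
  by_contra hab
  exact hb (le_sSup hab)

theorem sSup_le_of_forall_not_le_imp_le {k : α} (hk : ∀ b, ¬ b ≤ k → a ≤ b) {S : Set α}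
    (hS : ∀ b ∈ S, ¬ a ≤ b) : sSup S ≤ k :=
  sSup_le fun b hb => by
    by_contra hbk
    exact hS b hb (hk b hbk)

theorem forall_le_sSup_exists_mem_le_iff :
    (∀ S : Set α, a ≤ sSup S → ∃ b ∈ S, a ≤ b) ↔
      ∃ k : α, ¬ a ≤ k ∧ ∀ b, ¬ b ≤ k → a ≤ b := by
  constructor
  · intro h
    refine ⟨sSup {b | ¬ a ≤ b}, fun ha => ?_, fun b => le_of_not_le_sSup_setOf_not_le⟩
    obtain ⟨b, hb, hab⟩ := h _ ha
    exact hb hab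
  · rintro ⟨k, hak, hk⟩ S hS
    by_contra! hSa
    exact hak (hS.trans (sSup_le_of_forall_not_le_imp_le hk hSa))

end CompleteLattice

theorem stmt6 {R : Type*} [CommRing R] (I : Ideal R) :
    CompletelyStronglyHollow I ↔
      ∃ K : Ideal R, ¬ I ≤ K ∧ ∀ J : Ideal R, ¬ J ≤ K → I ≤ J :=
  forall_le_sSup_exists_mem_le_iff
end

section
/- Let I be a nonzero ideal of a commutative ring R. Then I is completely strongly hollow if and only if there exists a greatest ideal of R (by inclusion) among the ideals not containing I, i.e., an ideal J with I ⊄ J such that every ideal K with I ⊄ K satisfies K ⊆ J. -/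
/- In a complete lattice, `a` is completely join-prime exactly when the elements not above `a`
have a join that is still not above `a`; that join is then the greatest of them. -/
theorem CompleteLattice.forall_le_sSup_exists_le_iff {α : Type*} [CompleteLattice α] (a : α) :
    (∀ S : Set α, a ≤ sSup S → ∃ b ∈ S, a ≤ b) ↔ ∃ c, ¬ a ≤ c ∧ ∀ b, ¬ a ≤ b → b ≤ c := by
  constructor
  · intro h
    refine ⟨sSup {b | ¬ a ≤ b}, fun ha => ?_, fun b hb => le_sSup hb⟩
    obtain ⟨b, hb, hab⟩ := h _ ha
    exact hb hab
  · rintro ⟨c, hac, hc⟩ S hS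
    by_contra! hnot
    exact hac (hS.trans (sSup_le fun b hb => hc b (hnot b hb)))

theorem stmt7_general {R : Type*} [CommRing R] (I : Ideal R) :
    CompletelyStronglyHollow I ↔
      ∃ J : Ideal R, ¬ I ≤ J ∧ ∀ K : Ideal R, ¬ I ≤ K → K ≤ J :=
  CompleteLattice.forall_le_sSup_exists_le_iff I

theorem stmt7 {R : Type*} [CommRing R] (I : Ideal R) (hI : I ≠ ⊥) :
    CompletelyStronglyHollow I ↔
      ∃ J : Ideal R, ¬ I ≤ J ∧ ∀ K : Ideal R, ¬ I ≤ K → K ≤ J :=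
  stmt7_general I
end

section
/- Let R be an arithmetical ring (a ring whose lattice of ideals is distributive, equivalently (A+B) ∩ C = (A∩C) + (B∩C) for all ideals; equivalently ideals localize to chains) and I an ideal of R. If there exists an ideal K such that I is minimal (by inclusion) among ideals not contained in K, then I is completely strongly hollow. -/
section DistribAt

variable {α : Type*}

theorem Finset.inf_sup_eq_sup_inf_of_distrib_at [Lattice α] [OrderBot α] {ι : Type*} {a : α}
    (hdistrib : ∀ b c : α, a ⊓ (b ⊔ c) = a ⊓ b ⊔ a ⊓ c) (s : Finset ι) (f : ι → α) :
    a ⊓ s.sup f = s.sup fun i => a ⊓ f i := by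
  induction s using Finset.cons_induction with
  | empty => simp
  | cons i s _ ih => rw [Finset.sup_cons, Finset.sup_cons, hdistrib, ih]

theorem inf_sSup_le_of_distrib_at [CompleteLattice α] [IsCompactlyGenerated α] {a k : α}
    {S : Set α} (hdistrib : ∀ b c : α, a ⊓ (b ⊔ c) = a ⊓ b ⊔ a ⊓ c)
    (hS : ∀ b ∈ S, a ⊓ b ≤ k) : a ⊓ sSup S ≤ k := by
  rw [inf_sSup_eq_iSup_inf_sup_finset]
  refine iSup₂_le fun t ht => ?_
  rw [Finset.inf_sup_eq_sup_inf_of_distrib_at hdistrib]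
  exact Finset.sup_le fun b hb => hS b (ht hb)

theorem exists_le_of_le_sSup_of_minimal_not_le [CompleteLattice α] [IsCompactlyGenerated α]
    {a k : α} (hdistrib : ∀ b c : α, a ⊓ (b ⊔ c) = a ⊓ b ⊔ a ⊓ c) (hak : ¬ a ≤ k)
    (hmin : ∀ b, b < a → b ≤ k) {S : Set α} (haS : a ≤ sSup S) : ∃ b ∈ S, a ≤ b := by
  by_contra! hnot
  have hS : ∀ b ∈ S, a ⊓ b ≤ k := fun b hb =>
    hmin _ (inf_le_left.lt_of_ne fun h => hnot b hb (h ▸ inf_le_right))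
  exact hak (inf_eq_left.mpr haS ▸ inf_sSup_le_of_distrib_at hdistrib hS)

end DistribAt

theorem stmt9 {R : Type*} [CommRing R]
    (harith : ∀ A B C : Ideal R, A ⊓ (B + C) = A ⊓ B + A ⊓ C)
    (I : Ideal R)
    (hmin : ∃ K : Ideal R, ¬ I ≤ K ∧ ∀ J : Ideal R, J < I → J ≤ K) :
    CompletelyStronglyHollow I := by
  obtain ⟨K, hIK, hK⟩ := hmin
  have hdistrib : ∀ B C : Ideal R, I ⊓ (B ⊔ C) = I ⊓ B ⊔ I ⊓ C := harith I
  exact fun S hS => exists_le_of_le_sSup_of_minimal_not_le hdistrib hIK hK hS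
end

section
/- Let K be a strongly irreducible ideal of a commutative ring R. If there exists an ideal I that is minimal (by inclusion) with respect to not being contained in K, then I is completely strongly hollow. -/
def StronglyIrreducible {R : Type*} [CommRing R] (K : Ideal R) : Prop :=
  ∀ A B : Ideal R, A ⊓ B ≤ K → A ≤ K ∨ B ≤ K

theorem StronglyIrreducible.le_of_minimal_not_le {R : Type*} [CommRing R] {K I J : Ideal R}
    (hK : StronglyIrreducible K) (hIK : ¬ I ≤ K) (hmin : ∀ J : Ideal R, J < I → J ≤ K)
    (hIJ : ¬ I ≤ J) : J ≤ K := by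
  have hlt : I ⊓ J < I := inf_le_left.lt_of_ne fun h => hIJ (h ▸ inf_le_right)
  exact (hK I J (hmin _ hlt)).resolve_left hIK

theorem stmt10 {R : Type*} [CommRing R] (K I : Ideal R)
    (hK : StronglyIrreducible K)
    (hImin : ¬ I ≤ K ∧ ∀ J : Ideal R, J < I → J ≤ K) :
    CompletelyStronglyHollow I := by
  intro S hS
  by_contra! hnot
  have hSK : sSup S ≤ K :=
    sSup_le fun J hJ => hK.le_of_minimal_not_le hImin.1 hImin.2 (hnot J hJ)
  exact hImin.1 (hS.trans hSK)
end

section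
/- Let I be a strongly hollow ideal of a commutative ring R. If there exists an ideal K maximal (by inclusion) with respect to not containing I, then K is strongly irreducible. -/
theorem StronglyHollow.le_of_not_le_of_maximal {R : Type*} [CommRing R] {I K A : Ideal R}
    (hI : StronglyHollow I) (hIK : ¬ I ≤ K) (hmax : ∀ J : Ideal R, K < J → I ≤ J)
    (hA : ¬ A ≤ K) : I ≤ A :=
  (hI K A (hmax _ (left_lt_sup.mpr hA))).resolve_left hIK

theorem stmt11 {R : Type*} [CommRing R] (I K : Ideal R)
    (hI : StronglyHollow I)
    (hKmax : ¬ I ≤ K ∧ ∀ J : Ideal R, K < J → I ≤ J) :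
    StronglyIrreducible K := by
  obtain ⟨hIK, hmax⟩ := hKmax
  intro A B hAB
  by_contra! h
  have hIA : I ≤ A := hI.le_of_not_le_of_maximal hIK hmax h.1
  have hIB : I ≤ B := hI.le_of_not_le_of_maximal hIK hmax h.2
  exact hIK ((le_inf hIA hIB).trans hAB)
end

section
/- Let I be a strongly hollow ideal of a commutative ring R with I ⊄ J(R), where J(R) is the Jacobson radical. Then I is completely strongly hollow, and Γ_I (the sum of all ideals not containing I) equals the unique maximal ideal M of R not containing I. -/
/-!
Since `I ⊄ J(R)`, some maximal ideal `M` does not contain `I`. Every ideal `J` with `I ⊄ J` then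
lies in `M`: otherwise `M + J = R ⊇ I`, and strong hollowness puts `I` inside `M` or `J`. So `M`
is the largest ideal not containing `I`, and everything else follows from this.
-/

section

variable {R : Type*} [CommRing R] {I M : Ideal R}

theorem Ideal.exists_isMaximal_not_le_of_not_le_jacobson_bot (h : ¬ I ≤ (⊥ : Ideal R).jacobson) :
    ∃ M : Ideal R, M.IsMaximal ∧ ¬ I ≤ M := by
  by_contra! hall
  exact h (le_sInf fun M hM => hall M hM.2)

theorem StronglyHollow.le_of_isMaximal_of_not_le (hI : StronglyHollow I) (hM : M.IsMaximal)
    (hIM : ¬ I ≤ M) {J : Ideal R} (hIJ : ¬ I ≤ J) : J ≤ M := by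
  by_contra hJM
  have hMJ : M + J = ⊤ := codisjoint_iff.mp (hM.out.not_le_iff_codisjoint.mp hJM)
  exact (hI M J (hMJ ▸ le_top)).elim hIM hIJ

theorem StronglyHollow.completelyStronglyHollow (hI : StronglyHollow I) (hM : M.IsMaximal)
    (hIM : ¬ I ≤ M) : CompletelyStronglyHollow I := by
  intro S hIS
  by_contra! hS
  exact hIM (hIS.trans (sSup_le fun J hJ => hI.le_of_isMaximal_of_not_le hM hIM (hS J hJ)))

theorem StronglyHollow.eq_of_isMaximal_of_not_le (hI : StronglyHollow I) (hM : M.IsMaximal)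
    (hIM : ¬ I ≤ M) {N : Ideal R} (hN : N.IsMaximal) (hIN : ¬ I ≤ N) : N = M :=
  hN.eq_of_le hM.ne_top (hI.le_of_isMaximal_of_not_le hM hIM hIN)

theorem StronglyHollow.sSup_not_le_eq (hI : StronglyHollow I) (hM : M.IsMaximal)
    (hIM : ¬ I ≤ M) : sSup {J : Ideal R | ¬ I ≤ J} = M :=
  le_antisymm (sSup_le fun _ hJ => hI.le_of_isMaximal_of_not_le hM hIM hJ) (le_sSup hIM)

end

theorem stmt12 {R : Type*} [CommRing R] (I : Ideal R) (hI : StronglyHollow I)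
    (hJac : ¬ I ≤ (⊥ : Ideal R).jacobson) :
    CompletelyStronglyHollow I ∧
      ∃ M : Ideal R, M.IsMaximal ∧ ¬ I ≤ M ∧
        (∀ N : Ideal R, N.IsMaximal → ¬ I ≤ N → N = M) ∧
        sSup {J : Ideal R | ¬ I ≤ J} = M := by
  obtain ⟨M, hM, hIM⟩ := Ideal.exists_isMaximal_not_le_of_not_le_jacobson_bot hJac
  exact ⟨hI.completelyStronglyHollow hM hIM, M, hM, hIM,
    fun _ hN hIN => hI.eq_of_isMaximal_of_not_le hM hIM hN hIN, hI.sSup_not_le_eq hM hIM⟩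
end

section
/- Let I be a strongly hollow ideal of a commutative ring R with I ⊄ J(R). Then I is minimal with respect to not being contained in J(R): every ideal J with (0) ⊊ J ⊊ I satisfies J ⊆ J(R). -/
/-! If `J < I` and `M` is a maximal ideal with `J ⊄ M`, then `M + J = R ⊇ I`, so strong hollowness
puts `I` inside `M` (hence `J ⊆ M` after all) or inside `J` (impossible). So `J` lies in every
maximal ideal. -/

namespace StronglyHollow

variable {R : Type*} [CommRing R] {I J M : Ideal R}

theorem le_of_lt_of_isMaximal (hI : StronglyHollow I) (hJI : J < I) (hM : M.IsMaximal) :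
    J ≤ M := by
  by_contra hJM
  have hMJ : M + J = ⊤ := codisjoint_iff.mp (hM.out.not_le_iff_codisjoint.mp hJM)
  rcases hI M J (hMJ ▸ le_top) with hIM | hIJ
  · exact hJM (hJI.le.trans hIM)
  · exact hJI.not_ge hIJ

theorem le_jacobson_of_lt (hI : StronglyHollow I) (hJI : J < I) (K : Ideal R) :
    J ≤ K.jacobson :=
  le_sInf fun _ hM => hI.le_of_lt_of_isMaximal hJI hM.2

end StronglyHollow

theorem stmt13_general {R : Type*} [CommRing R] (I : Ideal R) (hI : StronglyHollow I) :
    ∀ J : Ideal R, ⊥ < J → J < I → J ≤ (⊥ : Ideal R).jacobson :=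
  fun _ _ hJI => hI.le_jacobson_of_lt hJI ⊥

theorem stmt13 {R : Type*} [CommRing R] (I : Ideal R) (hI : StronglyHollow I)
    (hJac : ¬ I ≤ (⊥ : Ideal R).jacobson) :
    ∀ J : Ideal R, ⊥ < J → J < I → J ≤ (⊥ : Ideal R).jacobson :=
  stmt13_general I hI
end

section
/- Let R be an integral domain and I a proper strongly hollow ideal of R. Then I ⊆ J(R), the Jacobson radical of R. -/
open Ideal

section

variable {R : Type*} [CommRing R]

theorem isUnit_of_span_singleton_le_span_singleton_mul {a x : R} (ha : a ∈ nonZeroDivisors R)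
    (h : span {a} ≤ span {a * x}) : IsUnit x := by
  obtain ⟨c, hc⟩ := span_singleton_le_span_singleton.mp h
  have hxc : a * 1 = a * (x * c) := by rw [mul_one, ← mul_assoc, ← hc]
  exact IsUnit.of_mul_eq_one c ((mul_cancel_left_mem_nonZeroDivisors ha).mp hxc).symm

namespace StronglyHollow

theorem isLocalRing [Nontrivial R] {a : R} (ha : a ∈ nonZeroDivisors R)
    (h : StronglyHollow (span {a})) : IsLocalRing R := by
  refine IsLocalRing.of_isUnit_or_isUnit_one_sub_self fun x => ?_
  have hsplit : span {a} ≤ span {a * x} + span {a * (1 - x)} := by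
    have hmem := Submodule.add_mem_sup (mem_span_singleton_self (a * x))
      (mem_span_singleton_self (a * (1 - x)))
    rw [← mul_add, add_sub_cancel, mul_one] at hmem
    exact (span_singleton_le_iff_mem _).mpr hmem
  exact (h _ _ hsplit).imp (isUnit_of_span_singleton_le_span_singleton_mul ha)
    (isUnit_of_span_singleton_le_span_singleton_mul ha)

theorem exists_eq_span_singleton_of_sup_eq_top {I J : Ideal R} (hI : StronglyHollow I)
    (hIJ : J ⊔ I = ⊤) (hle : ¬I ≤ J) : ∃ a, I = span {a} := by
  obtain ⟨m, hm, a, haI, hma⟩ := Submodule.mem_sup.mp ((eq_top_iff_one _).mp hIJ)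
  have hJa : J + span {a} = ⊤ := by
    rw [eq_top_iff_one, ← hma]
    exact Submodule.add_mem_sup hm (mem_span_singleton_self a)
  have hIa : I ≤ span {a} := (hI J _ (le_top.trans hJa.ge)).resolve_left hle
  exact ⟨a, le_antisymm hIa ((span_singleton_le_iff_mem I).mpr haI)⟩

end StronglyHollow

end

theorem stmt14 {R : Type*} [CommRing R] [IsDomain R] (I : Ideal R)
    (hproper : I ≠ ⊤) (hI : StronglyHollow I) :
    I ≤ (⊥ : Ideal R).jacobson := by
  by_cases hloc : IsLocalRing R
  · rw [IsLocalRing.jacobson_eq_maximalIdeal ⊥ bot_ne_top]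
    exact IsLocalRing.le_maximalIdeal hproper
  refine le_sInf fun M ⟨_, hM⟩ => by_contra fun hIM => hloc ?_
  have hMI : M ⊔ I = ⊤ := hM.out.2 _ (left_lt_sup.mpr hIM)
  obtain ⟨a, rfl⟩ := hI.exists_eq_span_singleton_of_sup_eq_top hMI hIM
  have ha : a ≠ 0 := by
    rintro rfl
    exact hIM (by simp)
  exact hI.isLocalRing (mem_nonZeroDivisors_of_ne_zero ha)
end

section
/- Let R be a semi-primitive integral domain (i.e., J(R) = 0). Then R has a nonzero strongly hollow ideal if and only if R is a field. -/
/-! A strongly hollow ideal `I` lies in every maximal ideal except at most one, `M` say, since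
distinct maximal ideals are comaximal. Then `I * M` lies in every maximal ideal, hence in the
Jacobson radical. In a semi-primitive domain this forces `I = 0` or `M = 0`, and `M = 0` being
maximal means `R` is a field. Conversely `⊤` is strongly hollow in any local ring. -/

namespace StronglyHollow

variable {R : Type*} [CommRing R] {I M N : Ideal R}

theorem le_of_not_le (hI : StronglyHollow I) (hM : M.IsMaximal) (hN : N.IsMaximal)
    (hMN : M ≠ N) (hIM : ¬ I ≤ M) : I ≤ N := by
  have hcop : M + N = ⊤ := by
    rw [Submodule.add_eq_sup]
    exact Ideal.IsMaximal.coprime_of_ne hM hN hMN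
  exact (hI M N (hcop ▸ le_top)).resolve_left hIM

theorem mul_le_jacobson_of_not_le (hI : StronglyHollow I) (hM : M.IsMaximal)
    (hIM : ¬ I ≤ M) : I * M ≤ (⊥ : Ideal R).jacobson := by
  refine le_sInf fun N ⟨_, hN⟩ => ?_
  by_cases hMN : M = N
  · exact hMN ▸ Ideal.mul_le_right
  · exact Ideal.mul_le_left.trans (hI.le_of_not_le hM hN hMN hIM)

end StronglyHollow

theorem IsLocalRing.stronglyHollow_top {R : Type*} [CommRing R] [IsLocalRing R] :
    StronglyHollow (⊤ : Ideal R) := by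
  intro A B h
  by_contra! hAB
  have hsup : A ⊔ B ≤ IsLocalRing.maximalIdeal R :=
    sup_le (IsLocalRing.le_maximalIdeal (top_le_iff.not.mp hAB.1))
      (IsLocalRing.le_maximalIdeal (top_le_iff.not.mp hAB.2))
  exact (IsLocalRing.maximalIdeal.isMaximal R).ne_top (top_le_iff.mp (h.trans hsup))

theorem stmt15 {R : Type*} [CommRing R] [IsDomain R]
    (hsemi : (⊥ : Ideal R).jacobson = ⊥) :
    (∃ I : Ideal R, I ≠ ⊥ ∧ StronglyHollow I) ↔ IsField R := by
  constructor
  · rintro ⟨I, hI, hSH⟩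
    by_contra hnf
    have hle : ∀ M : Ideal R, M.IsMaximal → I ≤ M := fun M hM => by
      by_contra hIM
      have hmul := hSH.mul_le_jacobson_of_not_le hM hIM
      rw [hsemi, le_bot_iff, Ideal.mul_eq_bot] at hmul
      exact hmul.elim hI (Ideal.bot_lt_of_maximal M hnf).ne'
    have hIJ : I ≤ (⊥ : Ideal R).jacobson := le_sInf fun M hM => hle M hM.2
    exact hI (le_bot_iff.mp (hsemi ▸ hIJ))
  · intro hF
    let := hF.toField
    exact ⟨⊤, top_ne_bot, IsLocalRing.stronglyHollow_top⟩
end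

section
/- Let R be a principal ideal domain. Then R admits a nonzero proper strongly hollow ideal if and only if R is a discrete valuation ring. -/
/-!
If the ideals of `R` form a chain, `A + B` is the larger of `A` and `B`, so every ideal is strongly
hollow; this applies to a discrete valuation ring. Conversely, a strongly hollow ideal `I` lies in
`A` or in `B` whenever `A + B = R`. For distinct maximal ideals `M`, `M'` of a Noetherian domain
all powers `M ^ n`, `M' ^ n` are comaximal, so a nonzero strongly hollow `I` would lie in arbitrarily
high powers of `M` or of `M'`, contradicting Krull's intersection theorem. Hence a principal ideal
domain with a nonzero proper strongly hollow ideal is local and not a field.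
-/

open IsLocalRing

section

variable {R : Type*} [CommRing R]

theorem stronglyHollow_of_total [@Std.Total (Ideal R) (· ≤ ·)] (I : Ideal R) :
    StronglyHollow I := by
  intro A B hI
  rw [Submodule.add_eq_sup] at hI
  rcases total_of (· ≤ ·) A B with hAB | hBA
  · exact .inr (sup_eq_right.mpr hAB ▸ hI)
  · exact .inl (sup_eq_left.mpr hBA ▸ hI)

theorem StronglyHollow.le_or_le_of_isCoprime {I A B : Ideal R} (hI : StronglyHollow I)
    (hAB : IsCoprime A B) : I ≤ A ∨ I ≤ B :=
  hI A B (by rw [Submodule.add_eq_sup, hAB.sup_eq]; exact le_top)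

theorem Ideal.exists_not_le_pow [IsNoetherianRing R] [IsDomain R] {I P : Ideal R} (hI : I ≠ ⊥)
    (hP : P ≠ ⊤) : ∃ n, ¬I ≤ P ^ n := by
  by_contra! h
  exact hI (eq_bot_iff.mpr (Ideal.iInf_pow_eq_bot_of_isDomain P hP ▸ le_iInf h))

theorem StronglyHollow.eq_of_isMaximal [IsNoetherianRing R] [IsDomain R] {I : Ideal R}
    (hI : StronglyHollow I) (hI0 : I ≠ ⊥) {M M' : Ideal R} (hM : M.IsMaximal)
    (hM' : M'.IsMaximal) : M = M' := by
  by_contra hne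
  obtain ⟨m, hm⟩ := Ideal.exists_not_le_pow hI0 hM.ne_top
  obtain ⟨m', hm'⟩ := Ideal.exists_not_le_pow hI0 hM'.ne_top
  have hcop : IsCoprime (M ^ max m m') (M' ^ max m m') := (Ideal.isCoprime_of_isMaximal hne).pow
  rcases hI.le_or_le_of_isCoprime hcop with h | h
  · exact hm (h.trans (Ideal.pow_le_pow_right (le_max_left m m')))
  · exact hm' (h.trans (Ideal.pow_le_pow_right (le_max_right m m')))

theorem StronglyHollow.isLocalRing_s16 [IsNoetherianRing R] [IsDomain R] {I : Ideal R}
    (hI : StronglyHollow I) (hI0 : I ≠ ⊥) : IsLocalRing R :=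
  let ⟨M, hM⟩ := Ideal.exists_maximal R
  .of_unique_max_ideal ⟨M, hM, fun _ hM' ↦ hI.eq_of_isMaximal hI0 hM' hM⟩

end

theorem stmt16 {R : Type*} [CommRing R] [IsDomain R] [IsPrincipalIdealRing R] :
    (∃ I : Ideal R, I ≠ ⊥ ∧ I ≠ ⊤ ∧ StronglyHollow I) ↔
      IsDiscreteValuationRing R := by
  constructor
  · rintro ⟨I, hI0, hItop, hI⟩
    have := hI.isLocalRing_s16 hI0
    exact { not_a_field' := ne_bot_of_le_ne_bot hI0 (le_maximalIdeal hItop) }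
  · intro
    exact ⟨maximalIdeal R, IsDiscreteValuationRing.not_a_field R,
      (maximalIdeal.isMaximal R).ne_top, stronglyHollow_of_total _⟩
end

section
/- Let R be a commutative ring and I ⊆ J(R) a strongly hollow ideal of R. Then for every maximal ideal M of R with dim_{R/M}(M/M²) ≥ 2, one has I ⊆ M². -/
open Module Submodule

section VectorSpace

variable {K V : Type*} [DivisionRing K] [AddCommGroup V] [Module K V]

theorem exists_notMem_span_singleton_of_two_le_rank (v : V) (h : 2 ≤ Module.rank K V) :
    ∃ w, w ∉ K ∙ v := by
  by_contra! hv
  have hrank := rank_span_le (R := K) ({v} : Set V)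
  have htop : K ∙ v = ⊤ := eq_top_iff.mpr fun w _ => hv w
  rw [htop, rank_top, Cardinal.mk_singleton] at hrank
  exact absurd (h.trans hrank) (by norm_num)

theorem mem_span_singleton_comm {v w : V} (hv : v ≠ 0) (h : v ∈ K ∙ w) : w ∈ K ∙ v := by
  obtain ⟨a, rfl⟩ := mem_span_singleton.mp h
  have ha : a ≠ 0 := by rintro rfl; exact hv (zero_smul K w)
  exact mem_span_singleton.mpr ⟨a⁻¹, inv_smul_smul₀ ha w⟩

theorem Module.Dual.ker_sup_ker_eq_top {f g : Dual K V} {w : V} (hf : f w = 0) (hg : g w ≠ 0) :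
    LinearMap.ker f ⊔ LinearMap.ker g = ⊤ := by
  refine eq_top_iff.mpr fun x _ => ?_
  have hx : x = (g x / g w) • w + (x - (g x / g w) • w) := by abel
  rw [hx]
  refine add_mem_sup ?_ ?_
  · simp [hf]
  · simp [div_mul_cancel₀ _ hg]

theorem exists_sup_eq_top_notMem_notMem {v : V} (hv : v ≠ 0) (h : 2 ≤ Module.rank K V) :
    ∃ U W : Submodule K V, U ⊔ W = ⊤ ∧ v ∉ U ∧ v ∉ W := by
  obtain ⟨w, hw⟩ := exists_notMem_span_singleton_of_two_le_rank v h
  have hvw : v ∉ K ∙ w := fun h' => hw (mem_span_singleton_comm hv h')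
  obtain ⟨f, hfv, hfw⟩ := exists_dual_map_eq_bot_of_notMem hvw inferInstance
  obtain ⟨g, hgw, hgv⟩ := exists_dual_map_eq_bot_of_notMem hw inferInstance
  have hfw' : f w = 0 := (mem_bot K).mp (hfw ▸ mem_map_of_mem (mem_span_singleton_self w))
  have hgv' : g v = 0 := (mem_bot K).mp (hgv ▸ mem_map_of_mem (mem_span_singleton_self v))
  refine ⟨LinearMap.ker f, LinearMap.ker (f + g), Dual.ker_sup_ker_eq_top hfw' ?_, hfv, ?_⟩
  · simpa [hfw'] using hgw
  · simpa [hgv'] using hfv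

end VectorSpace

namespace Ideal

variable {R : Type*} [CommRing R] (M : Ideal R)

def ofCotangent (U : Submodule R M.Cotangent) : Ideal R :=
  (U.comap M.toCotangent).map M.subtype

variable {M}

theorem mem_ofCotangent {U : Submodule R M.Cotangent} (x : M) :
    (x : R) ∈ M.ofCotangent U ↔ M.toCotangent x ∈ U := by
  simp [ofCotangent]

theorem le_ofCotangent_sup_ofCotangent {U W : Submodule R M.Cotangent} (h : U ⊔ W = ⊤) :
    M ≤ M.ofCotangent U ⊔ M.ofCotangent W := by
  have hcomap : (U ⊔ W).comap M.toCotangent = U.comap M.toCotangent ⊔ W.comap M.toCotangent := by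
    conv_lhs => rw [← map_comap_eq_of_surjective M.toCotangent_surjective U,
      ← map_comap_eq_of_surjective M.toCotangent_surjective W, ← Submodule.map_sup, comap_map_eq]
    exact sup_eq_left.mpr (le_sup_of_le_left (LinearMap.ker_le_comap _))
  rw [ofCotangent, ofCotangent, ← Submodule.map_sup, ← hcomap, h, Submodule.comap_top,
    Submodule.map_top, range_subtype]

end Ideal

theorem stmt17 {R : Type*} [CommRing R] (I : Ideal R)
    (hIJ : I ≤ (⊥ : Ideal R).jacobson) (hI : StronglyHollow I) :
    ∀ M : Ideal R, M.IsMaximal →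
      2 ≤ Module.rank (R ⧸ M) M.Cotangent → I ≤ M ^ 2 := by
  intro M hM hrank
  have hIM : I ≤ M := hIJ.trans (sInf_le ⟨bot_le, hM⟩)
  by_contra hI2
  obtain ⟨a, haI, ha2⟩ := SetLike.not_le_iff_exists.mp hI2
  let a' : M := ⟨a, hIM haI⟩
  have ha' : M.toCotangent a' ≠ 0 := by rwa [ne_eq, Ideal.toCotangent_eq_zero]
  let : Field (R ⧸ M) := Ideal.Quotient.field M
  obtain ⟨U, W, hUW, haU, haW⟩ := exists_sup_eq_top_notMem_notMem ha' hrank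
  have hsup : (U.restrictScalars R) ⊔ (W.restrictScalars R) = ⊤ := by
    rw [← restrictScalars_sup, hUW, restrictScalars_top]
  rcases hI _ _ (hIM.trans (Ideal.le_ofCotangent_sup_ofCotangent hsup)) with hIU | hIW
  · exact haU ((Ideal.mem_ofCotangent a').mp (hIU haI))
  · exact haW ((Ideal.mem_ofCotangent a').mp (hIW haI))
end

section
/- Every strongly irreducible ideal of an Artinian commutative ring R is completely strongly irreducible: if K is a strongly irreducible ideal and {C_ω} is a family of ideals with ∩_ω C_ω ⊆ K, then C_ω ⊆ K for some ω. -/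
theorem InfPrime.exists_le_of_sInf_le {α : Type*} [CompleteLattice α] [WellFoundedLT α] {a : α}
    (ha : InfPrime a) {s : Set α} (hs : sInf s ≤ a) : ∃ b ∈ s, b ≤ a := by
  obtain ⟨t, hts, hst⟩ := CompleteLattice.WellFoundedGT.isSupFiniteCompact αᵒᵈ s
  have hst : sInf s = Finset.inf (α := α) t id := hst
  obtain ⟨b, hbt, hba⟩ := ha.finset_inf_le.mp (hst ▸ hs)
  exact ⟨b, hts hbt, hba⟩

theorem StronglyIrreducible.infPrime {R : Type*} [CommRing R] {K : Ideal R}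
    (hK : StronglyIrreducible K) (hK_ne_top : K ≠ ⊤) : InfPrime K :=
  ⟨not_isMax_iff_ne_top.mpr hK_ne_top, fun A B h => hK A B h⟩

theorem stmt19 {R : Type*} [CommRing R] [IsArtinianRing R] (K : Ideal R)
    (hK : StronglyIrreducible K) :
    ∀ S : Set (Ideal R), S.Nonempty → sInf S ≤ K → ∃ C ∈ S, C ≤ K := by
  intro S ⟨C, hC⟩ hSK
  rcases eq_or_ne K ⊤ with rfl | hK_ne_top
  · exact ⟨C, hC, le_top⟩
  · exact (hK.infPrime hK_ne_top).exists_le_of_sInf_le hSK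
end
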